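/- arXiv:hep-th/0007220 — 5 statements merged into one kernel-verified Lean document; each statement's English description precedes it below -/
import Mathlib

section
/- Let V be a nonzero finite-dimensional real inner product space equipped with a bilinear multiplication · : V × V → V that is commutative (x·y = y·x), associative (x·(y·z) = (x·y)·z), and invariant with respect to the inner product (⟨x·y, z⟩ = ⟨y, x·z⟩ for all x, y, z). Then there exist an orthonormal basis (e₁, …, e_N) of V and nonnegative real numbers κ₁, …, κ_N such that e_a · e_b = 0 whenever a ≠ b and e_a · e_a = κ_a e_a for every a. In particular, V decomposes as an orthogonal direct sum of one-dimensional ideals of the algebra (V, ·). -/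
/-!
The left multiplications `x ↦ mul x` are symmetric operators by invariance, and they pairwise
commute by commutativity and associativity, so they are simultaneously diagonalised by an
orthonormal basis: `mul x (e a) = μ a x • e a`. Then `mul (e a) (e b)` equals both
`μ b (e a) • e b` and `μ a (e b) • e a`, which forces it to vanish when `a ≠ b`, while
`mul (e a) (e a) = μ a (e a) • e a`; replacing `e a` by `-e a` flips the sign of this coupling.
-/

open scoped RealInnerProductSpace

open Module

section

variable {𝕜 E ι : Type*} [RCLike 𝕜] [NormedAddCommGroup E] [InnerProductSpace 𝕜 E]

theorem Orthonormal.smul_of_forall_norm_eq_one {v : ι → E} (hv : Orthonormal 𝕜 v)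
    {c : ι → 𝕜} (hc : ∀ i, ‖c i‖ = 1) : Orthonormal 𝕜 fun i ↦ c i • v i := by
  classical
  rw [orthonormal_iff_ite] at hv ⊢
  intro i j
  rw [inner_smul_left, inner_smul_right, hv]
  split_ifs with h
  · subst h
    rw [mul_one, RCLike.conj_mul, hc, RCLike.ofReal_one, one_pow]
  · simp

theorem OrthonormalBasis.exists_apply_eq_smul [Fintype ι] (b : OrthonormalBasis ι 𝕜 E)
    {c : ι → 𝕜} (hc : ∀ i, ‖c i‖ = 1) :
    ∃ b' : OrthonormalBasis ι 𝕜 E, ∀ i, b' i = c i • b i := by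
  have hunit : ∀ i, IsUnit (c i) := fun i ↦ Ne.isUnit (norm_ne_zero_iff.mp (by simp [hc i]))
  refine ⟨(b.toBasis.isUnitSMul hunit).toOrthonormalBasis ?_, fun i ↦ ?_⟩
  · convert b.orthonormal.smul_of_forall_norm_eq_one hc
    simp [Basis.isUnitSMul_apply]
  · simp [Basis.isUnitSMul_apply]

theorem DirectSum.IsInternal.exists_orthonormalBasis_forall_mem [FiniteDimensional 𝕜 E]
    [DecidableEq ι] {V : ι → Submodule 𝕜 E} (hint : DirectSum.IsInternal V)
    (horth : OrthogonalFamily 𝕜 (fun i ↦ V i) fun i ↦ (V i).subtypeₗᵢ) :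
    ∃ (b : OrthonormalBasis (Fin (finrank 𝕜 E)) 𝕜 E) (f : Fin (finrank 𝕜 E) → ι),
      ∀ a, b a ∈ V (f a) := by
  have : Fintype {i // V i ≠ ⊥} :=
    (WellFoundedGT.finite_ne_bot_of_iSupIndep hint.submodule_iSupIndep).fintype
  have hint' := DirectSum.isInternal_ne_bot_iff.mpr hint
  have horth' := horth.comp (Subtype.val_injective (p := fun i ↦ V i ≠ ⊥))
  exact ⟨hint'.subordinateOrthonormalBasis rfl horth',
    fun a ↦ (hint'.subordinateOrthonormalBasisIndex rfl a horth').1,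
    fun a ↦ hint'.subordinateOrthonormalBasis_subordinate rfl a horth'⟩

open Function in
theorem LinearMap.IsSymmetric.exists_orthonormalBasis_apply_eq_smul_of_commute
    [FiniteDimensional 𝕜 E] {T : ι → E →ₗ[𝕜] E} (hT : ∀ i, (T i).IsSymmetric)
    (hC : Pairwise (Commute on T)) :
    ∃ (b : OrthonormalBasis (Fin (finrank 𝕜 E)) 𝕜 E) (μ : Fin (finrank 𝕜 E) → ι → 𝕜),
      ∀ a i, T i (b a) = μ a i • b a := by
  classical
  obtain ⟨b, μ, hb⟩ := (directSum_isInternal_of_pairwise_commute hT hC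
    ).exists_orthonormalBasis_forall_mem (orthogonalFamily_iInf_eigenspaces hT)
  exact ⟨b, μ, fun a i ↦
    Module.End.mem_eigenspace_iff.mp ((Submodule.mem_iInf _).mp (hb a) i)⟩

end

theorem LinearIndependent.bilin_apply_eq_zero_of_apply_eq_smul {K M ι : Type*} [Field K]
    [AddCommGroup M] [Module K M]
    {mul : M →ₗ[K] M →ₗ[K] M} (hcomm : ∀ x y, mul x y = mul y x) {v : ι → M}
    (hv : LinearIndependent K v) {μ : ι → M → K} (hμ : ∀ a x, mul x (v a) = μ a x • v a)
    {a c : ι} (hac : a ≠ c) : mul (v a) (v c) = 0 := by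
  have key := (LinearIndepOn.pair_iff v hac.symm).mp (hv.linearIndepOn _) (μ c (v a))
    (-μ a (v c)) (by rw [neg_smul, ← hμ c, ← hμ a, hcomm, add_neg_cancel])
  rw [hμ, key.1, zero_smul]

theorem commute_apply_of_comm_of_assoc {R M : Type*} [CommSemiring R] [AddCommMonoid M]
    [Module R M] {mul : M →ₗ[R] M →ₗ[R] M} (hcomm : ∀ x y, mul x y = mul y x)
    (hassoc : ∀ x y z, mul x (mul y z) = mul (mul x y) z) (x y : M) :
    Commute (mul x) (mul y) :=
  LinearMap.ext fun z ↦ by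
    rw [Module.End.mul_apply, Module.End.mul_apply, hassoc, hassoc, hcomm x y]

theorem multi_graviton_algebra_trivial_general
    {V : Type*} [NormedAddCommGroup V] [InnerProductSpace ℝ V]
    [FiniteDimensional ℝ V]
    (mul : V →ₗ[ℝ] V →ₗ[ℝ] V)
    (hcomm : ∀ x y : V, mul x y = mul y x)
    (hassoc : ∀ x y z : V, mul x (mul y z) = mul (mul x y) z)
    (hinv : ∀ x y z : V, ⟪mul x y, z⟫ = ⟪y, mul x z⟫) :
    ∃ (e : OrthonormalBasis (Fin (Module.finrank ℝ V)) ℝ V)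
      (κ : Fin (Module.finrank ℝ V) → ℝ),
      (∀ a, 0 ≤ κ a) ∧
      (∀ a b, a ≠ b → mul (e a) (e b) = 0) ∧
      (∀ a, mul (e a) (e a) = κ a • e a) := by
  obtain ⟨b, μ, hb⟩ := LinearMap.IsSymmetric.exists_orthonormalBasis_apply_eq_smul_of_commute
    (T := mul) (fun x ↦ hinv x) fun x y _ ↦ commute_apply_of_comm_of_assoc hcomm hassoc x y
  let ε : Fin (finrank ℝ V) → ℝ := fun a ↦ if 0 ≤ μ a (b a) then 1 else -1
  have hε : ∀ a, ‖ε a‖ = 1 := fun a ↦ by dsimp only [ε]; split_ifs <;> simp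
  obtain ⟨e, he⟩ := b.exists_apply_eq_smul hε
  refine ⟨e, fun a ↦ ε a * μ a (b a), fun a ↦ ?_, fun a c hac ↦ ?_, fun a ↦ ?_⟩
  · dsimp only [ε]
    split_ifs <;> linarith
  · simp only [he, map_smul, LinearMap.smul_apply,
      b.orthonormal.linearIndependent.bilin_apply_eq_zero_of_apply_eq_smul hcomm hb hac,
      smul_zero]
  · simp only [he, map_smul, LinearMap.smul_apply, hb, smul_smul]
    congr 1
    ring

/-- A nonzero finite-dimensional real inner product space with a
commutative, associative, inner-product-invariant bilinear multiplication admits an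
orthonormal basis of mutually annihilating idempotent-like vectors with nonnegative
self-coupling constants: the algebra is an orthogonal direct sum of one-dimensional
ideals. -/
theorem multi_graviton_algebra_trivial
    {V : Type*} [NormedAddCommGroup V] [InnerProductSpace ℝ V]
    [FiniteDimensional ℝ V] [Nontrivial V]
    (mul : V →ₗ[ℝ] V →ₗ[ℝ] V)
    (hcomm : ∀ x y : V, mul x y = mul y x)
    (hassoc : ∀ x y z : V, mul x (mul y z) = mul (mul x y) z)
    (hinv : ∀ x y z : V, ⟪mul x y, z⟫ = ⟪y, mul x z⟫) :
    ∃ (e : OrthonormalBasis (Fin (Module.finrank ℝ V)) ℝ V)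
      (κ : Fin (Module.finrank ℝ V) → ℝ),
      (∀ a, 0 ≤ κ a) ∧
      (∀ a b, a ≠ b → mul (e a) (e b) = 0) ∧
      (∀ a, mul (e a) (e a) = κ a • e a) :=
  multi_graviton_algebra_trivial_general mul hcomm hassoc hinv
end

section
/- Let V be a real inner product space with a bilinear multiplication · : V × V → V that is commutative, associative, and invariant with respect to the inner product (⟨x·y, z⟩ = ⟨y, x·z⟩ for all x, y, z). If x ∈ V is nilpotent, i.e. some power x^m (m ≥ 2, with powers defined by x^2 = x·x, x^{k+1} = x·x^k) equals 0, then x·y = 0 for every y ∈ V. In particular x·x = 0, so the only nilpotent elements are those that multiply to zero with everything. -/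
open scoped RealInnerProductSpace

/-- Powers of an element with respect to a bilinear multiplication:
`mulPow mul x 1 = x`, `mulPow mul x (k+1) = x · (mulPow mul x k)`
(so `mulPow mul x 2 = x·x`, etc.).  The value at `0` is irrelevant here and
set to `0`. -/
def mulPow {V : Type*} [AddCommGroup V] [Module ℝ V]
    (mul : V →ₗ[ℝ] V →ₗ[ℝ] V) (x : V) : ℕ → V
  | 0 => 0
  | 1 => x
  | (k + 2) => mul x (mulPow mul x (k + 1))

/-- In a real inner product space with a commutative, associative
multiplication that is invariant with respect to the inner product, any nilpotent
element (some power `x^m = 0` with `m ≥ 2`) multiplies everything to zero. -/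
theorem nilpotent_element_annihilates
    {V : Type*} [NormedAddCommGroup V] [InnerProductSpace ℝ V]
    (mul : V →ₗ[ℝ] V →ₗ[ℝ] V)
    (hcomm : ∀ x y : V, mul x y = mul y x)
    (hassoc : ∀ x y z : V, mul x (mul y z) = mul (mul x y) z)
    (hinv : ∀ x y z : V, ⟪mul x y, z⟫ = ⟪y, mul x z⟫)
    (x : V) (m : ℕ) (hm : 2 ≤ m) (hnil : mulPow mul x m = 0) :
    (∀ y : V, mul x y = 0) ∧ mul x x = 0 := by
  -- step down: x^(k+1) = 0 → x^k = 0 for k ≥ 2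
  have hstep : ∀ k : ℕ, 2 ≤ k → mulPow mul x (k + 1) = 0 → mulPow mul x k = 0 := by
    intro k hk h
    obtain ⟨j, rfl⟩ : ∃ j, k = j + 2 := ⟨k - 2, by omega⟩
    have key : ⟪mulPow mul x (j + 2), mulPow mul x (j + 2)⟫ = 0 := by
      have h1 : mulPow mul x (j + 2) = mul x (mulPow mul x (j + 1)) := rfl
      calc ⟪mulPow mul x (j + 2), mulPow mul x (j + 2)⟫
          = ⟪mul x (mulPow mul x (j + 1)), mulPow mul x (j + 2)⟫ := by rw [← h1]
        _ = ⟪mulPow mul x (j + 1), mul x (mulPow mul x (j + 2))⟫ := hinv _ _ _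
        _ = ⟪mulPow mul x (j + 1), mulPow mul x (j + 3)⟫ := rfl
        _ = 0 := by rw [show mulPow mul x (j + 3) = 0 from h, inner_zero_right]
    exact inner_self_eq_zero.mp key
  -- hence x^2 = 0
  have hsq : mulPow mul x 2 = 0 := by
    induction m with
    | zero => omega
    | succ n ih =>
      rcases Nat.lt_or_ge n 2 with h | h
      · interval_cases n
        · omega
        · exact hnil
      · exact ih h (hstep n h hnil)
  have hxx : mul x x = 0 := hsq
  refine ⟨fun y => ?_, hxx⟩
  have : ⟪mul x y, mul x y⟫ = 0 := by
    calc ⟪mul x y, mul x y⟫ = ⟪y, mul x (mul x y)⟫ := hinv _ _ _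
      _ = ⟪y, mul (mul x x) y⟫ := by rw [hassoc]
      _ = 0 := by rw [hxx, map_zero, LinearMap.zero_apply, inner_zero_right]
  exact inner_self_eq_zero.mp this
end

section
/- Let N ≥ 1, let κ : Fin N → ℝ, and define structure constants a^c_{ab} (a, b, c ∈ Fin N) by a^c_{ab} = κ_a if a = b = c and a^c_{ab} = 0 otherwise. Suppose ξ ∈ ℝᴺ satisfies 2 ξ_a ξ_b − Σ_c a^c_{ba} ξ_c = 0 for all a, b. Then ξ_a ξ_b = 0 whenever a ≠ b; consequently there is at most one index a with ξ_a ≠ 0, and for that index ξ_a = κ_a / 2. -/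
/-- Let the structure constants be diagonal, `a^c_{ab} = κ_a` if
`a = b = c` and `0` otherwise, and suppose the scalar-field couplings `ξ` satisfy the
second-order consistency condition `2 ξ_a ξ_b − Σ_c a^c_{ba} ξ_c = 0`.  Then
`ξ_a ξ_b = 0` for `a ≠ b`, hence at most one coupling is nonzero, and a nonzero
coupling equals `κ_a / 2`: a scalar field couples to at most one graviton. -/
theorem scalar_field_couples_to_at_most_one_graviton
    (N : ℕ) (hN : 1 ≤ N) (κ : Fin N → ℝ)
    (A : Fin N → Fin N → Fin N → ℝ)
    (hA : ∀ c a b : Fin N, A c a b = if a = b ∧ b = c then κ a else 0)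
    (ξ : Fin N → ℝ)
    (hξ : ∀ a b : Fin N, 2 * ξ a * ξ b - ∑ c, A c b a * ξ c = 0) :
    (∀ a b : Fin N, a ≠ b → ξ a * ξ b = 0) ∧
    (∀ a b : Fin N, ξ a ≠ 0 → ξ b ≠ 0 → a = b) ∧
    (∀ a : Fin N, ξ a ≠ 0 → ξ a = κ a / 2) := by
  have key : ∀ a b : Fin N, 2 * ξ a * ξ b = if b = a then κ b * ξ b else 0 := by
    intro a b
    have h := hξ a b
    have hsum : ∑ c, A c b a * ξ c = if b = a then κ b * ξ b else 0 := by
      by_cases hba : b = a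
      · subst hba
        rw [Finset.sum_eq_single b]
        · simp [hA]
        · intro c _ hc; simp [hA, Ne.symm hc]
        · simp
      · rw [if_neg hba]
        apply Finset.sum_eq_zero
        intro c _
        simp [hA, hba]
    rw [hsum] at h
    linarith [h]
  have h1 : ∀ a b : Fin N, a ≠ b → ξ a * ξ b = 0 := by
    intro a b hab
    have := key a b
    rw [if_neg (fun h => hab h.symm)] at this
    linarith
  refine ⟨h1, ?_, ?_⟩
  · intro a b ha hb
    by_contra hab
    exact ha (by
      have := h1 a b hab
      rcases mul_eq_zero.mp this with h | h
      · exact h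
      · exact absurd h hb)
  · intro a ha
    have := key a a
    rw [if_pos rfl] at this
    have h2 : ξ a * (2 * ξ a - κ a) = 0 := by ring_nf; nlinarith [this]
    rcases mul_eq_zero.mp h2 with h | h
    · exact absurd h ha
    · linarith
end

section
/- Let V be a finite-dimensional real inner product space with a commutative bilinear multiplication ·, and suppose (e₁, …, e_N) and (f₁, …, f_N) are two orthonormal bases of V satisfying e_a · e_b = δ_{ab} κ_a e_a and f_a · f_b = δ_{ab} κ'_a f_a, where all κ_a > 0 and all κ'_a > 0. Then there exists a permutation σ of {1, …, N} such that f_a = e_{σ(a)} and κ'_a = κ_{σ(a)} for every a. -/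
/-!
In the coordinates of `e` the multiplication reads `(x · y)ᵢ = κᵢ xᵢ yᵢ`. As `f_a · f_b = 0` for
`a ≠ b` and no `κᵢ` vanishes, the coordinate supports of the `f_a` are pairwise disjoint; being
nonempty, these `N` subsets of an `N`-element set are the singletons `{σ a}` of a permutation `σ`.
So `f_a = c_a e_{σ a}`, and `f_a · f_a = κ'_a f_a` gives `κ_{σ a} c_a = κ'_a`, whence `c_a > 0`;
as `f_a` is a unit vector, `c_a = 1`.
-/

open Relator in
theorem Finite.exists_perm_iff_eq_of_leftTotal_of_leftUnique {ι : Type*} [Finite ι]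
    {R : ι → ι → Prop} (htot : LeftTotal R) (huniq : LeftUnique R) :
    ∃ σ : Equiv.Perm ι, ∀ a i, R a i ↔ i = σ a := by
  choose g hg using htot
  have hg_inj : Function.Injective g := fun a b hab => huniq (hg a) (hab ▸ hg b)
  refine ⟨Equiv.ofBijective g (Finite.injective_iff_bijective.mp hg_inj), fun a i => ⟨?_, ?_⟩⟩
  · intro hai
    obtain ⟨b, rfl⟩ := (Finite.injective_iff_surjective.mp hg_inj) i
    rw [huniq hai (hg b)]
    rfl
  · rintro rfl
    exact hg a

theorem Module.Basis.eq_repr_smul_of_repr_eq_zero {ι R M : Type*} [Semiring R] [AddCommMonoid M]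
    [Module R M] (b : Module.Basis ι R M) {x : M} {j : ι} (hx : ∀ i, i ≠ j → b.repr x i = 0) :
    x = b.repr x j • b j := by
  classical
  have : b.repr x = Finsupp.single j (b.repr x j) := by
    ext i
    rcases eq_or_ne i j with rfl | hij
    · simp
    · simp [hx i hij, hij.symm]
  rw [← b.repr_symm_single, ← this, b.repr.symm_apply_apply]

section Diagonal

variable {ι R M : Type*} [CommSemiring R] [AddCommMonoid M] [Module R M] [DecidableEq ι]
  {mul : M →ₗ[R] M →ₗ[R] M} {b : Module.Basis ι R M} {κ : ι → R}

theorem Module.Basis.repr_mul_of_diagonal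
    (hb : ∀ i j, mul (b i) (b j) = if i = j then κ i • b i else 0) (x y : M) (i : ι) :
    b.repr (mul x y) i = κ i * (b.repr x i * b.repr y i) := by
  have key : mul.compr₂ (b.coord i) =
      κ i • (LinearMap.mul R R).compl₁₂ (b.coord i) (b.coord i) := by
    refine LinearMap.ext_basis b b fun j k => ?_
    simp only [LinearMap.compr₂_apply, LinearMap.smul_apply, LinearMap.compl₁₂_apply,
      LinearMap.mul_apply', Module.Basis.coord_apply, hb, Module.Basis.repr_self]
    rcases eq_or_ne j k with rfl | hjk <;> rcases eq_or_ne j i with rfl | hji <;>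
      simp [Finsupp.single_apply, *]
  simpa using LinearMap.congr_fun₂ key x y

variable [IsDomain R]

theorem Module.Basis.repr_eq_zero_or_of_mul_eq_zero
    (hb : ∀ i j, mul (b i) (b j) = if i = j then κ i • b i else 0) {x y : M} (hxy : mul x y = 0)
    {i : ι} (hκ : κ i ≠ 0) : b.repr x i = 0 ∨ b.repr y i = 0 := by
  have := b.repr_mul_of_diagonal hb x y i
  rw [hxy, map_zero, Finsupp.coe_zero, Pi.zero_apply, eq_comm] at this
  simpa [hκ] using this

theorem Module.Basis.mul_repr_eq_of_mul_self_eq_smul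
    (hb : ∀ i j, mul (b i) (b j) = if i = j then κ i • b i else 0) {x : M} {c : R}
    (hx : mul x x = c • x) {i : ι} (hxi : b.repr x i ≠ 0) : κ i * b.repr x i = c := by
  have := b.repr_mul_of_diagonal hb x x i
  rw [hx, map_smul, Finsupp.smul_apply, smul_eq_mul, ← mul_assoc] at this
  exact (mul_right_cancel₀ hxi this).symm

end Diagonal

theorem diagonalizing_basis_unique_up_to_permutation_general
    {V : Type*} [NormedAddCommGroup V] [InnerProductSpace ℝ V]
    {N : ℕ}
    (mul : V →ₗ[ℝ] V →ₗ[ℝ] V)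
    (e f : OrthonormalBasis (Fin N) ℝ V)
    (κ κ' : Fin N → ℝ)
    (hκ : ∀ a, 0 < κ a) (hκ' : ∀ a, 0 < κ' a)
    (he : ∀ a b, mul (e a) (e b) = if a = b then κ a • e a else 0)
    (hf : ∀ a b, mul (f a) (f b) = if a = b then κ' a • f a else 0) :
    ∃ σ : Equiv.Perm (Fin N), ∀ a, f a = e (σ a) ∧ κ' a = κ (σ a) := by
  set b := e.toBasis
  have hb : ∀ i j, mul (b i) (b j) = if i = j then κ i • b i else 0 := by simpa [b] using he
  obtain ⟨σ, hσ⟩ := Finite.exists_perm_iff_eq_of_leftTotal_of_leftUnique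
    (R := fun a i => b.repr (f a) i ≠ 0)
    (fun a => Finsupp.ne_iff.mp (b.repr.map_ne_zero_iff.mpr (f.orthonormal.ne_zero a)))
    (fun a a' i ha ha' => by_contra fun hne =>
      (b.repr_eq_zero_or_of_mul_eq_zero hb (by simpa [hne] using hf a a') (hκ i).ne').elim ha ha')
  set c := fun a => b.repr (f a) (σ a)
  have hfa (a : Fin N) : f a = c a • e (σ a) :=
    b.eq_repr_smul_of_repr_eq_zero fun i hi => by_contra fun h => hi ((hσ a i).mp h)
  have hκc (a : Fin N) : κ (σ a) * c a = κ' a :=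
    b.mul_repr_eq_of_mul_self_eq_smul hb (by simpa using hf a a) ((hσ a (σ a)).mpr rfl)
  have hc (a : Fin N) : c a = 1 := by
    have hpos : 0 < c a := pos_of_mul_pos_right ((hκc a).symm ▸ hκ' a) (hκ (σ a)).le
    have hnorm : ‖c a • e (σ a)‖ = 1 := hfa a ▸ f.orthonormal.1 a
    rwa [norm_smul, e.orthonormal.1, mul_one, Real.norm_of_nonneg hpos.le] at hnorm
  exact ⟨σ, fun a => ⟨by rw [hfa, hc, one_smul], by rw [← hκc, hc, mul_one]⟩⟩

/-- If two orthonormal bases of a finite-dimensional real inner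
product space both diagonalize a commutative bilinear multiplication, with all
self-coupling constants strictly positive (`e_a·e_b = δ_{ab} κ_a e_a` and
`f_a·f_b = δ_{ab} κ'_a f_a`), then the two bases coincide up to a permutation, which
also matches the coupling constants. -/
theorem diagonalizing_basis_unique_up_to_permutation
    {V : Type*} [NormedAddCommGroup V] [InnerProductSpace ℝ V]
    [FiniteDimensional ℝ V] {N : ℕ}
    (mul : V →ₗ[ℝ] V →ₗ[ℝ] V)
    (hcomm : ∀ x y : V, mul x y = mul y x)
    (e f : OrthonormalBasis (Fin N) ℝ V)
    (κ κ' : Fin N → ℝ)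
    (hκ : ∀ a, 0 < κ a) (hκ' : ∀ a, 0 < κ' a)
    (he : ∀ a b, mul (e a) (e b) = if a = b then κ a • e a else 0)
    (hf : ∀ a b, mul (f a) (f b) = if a = b then κ' a • f a else 0) :
    ∃ σ : Equiv.Perm (Fin N), ∀ a, f a = e (σ a) ∧ κ' a = κ (σ a) :=
  diagonalizing_basis_unique_up_to_permutation_general mul e f κ κ' hκ hκ' he hf
end

section
/- Let N ≥ 1 and let a_{abc} (a, b, c ∈ Fin N) be real numbers that are fully symmetric under all permutations of (a, b, c) and satisfy the associativity condition Σ_d a_{dab} a_{dcf} = Σ_d a_{dac} a_{dbf} for all a, b, c, f (associativity of the product (x·y)^a = Σ_{b,c} a_{abc} x^b y^c on ℝᴺ with the standard inner product). Then there exists an orthogonal matrix R ∈ O(N) such that the transformed structure constants ã_{abc} = Σ_{a',b',c'} R_{a a'} R_{b b'} R_{c c'} a_{a'b'c'} vanish whenever two of the indices a, b, c are different. -/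
/-!
Contracting the structure constants with one vector gives the multiplication operators
`L_d = (a_{d j k})_{j k}`. Full symmetry makes each `L_d` a symmetric matrix, and together with
associativity it makes them pairwise commute. Commuting symmetric matrices are simultaneously
orthogonally diagonalizable; with `R` the orthogonal matrix whose rows are a joint eigenbasis,
`ã_{ijk} = ∑_{i'} R_{i i'} (R L_{i'} Rᵀ)_{jk}` vanishes for `j ≠ k`, and the symmetry of `ã` in its
first two indices covers the remaining case `i ≠ j = k`.
-/

open Module Function

theorem LinearMap.IsSymmetric.exists_orthonormalBasis_forall_apply_eq_smul
    {𝕜 E κ : Type*} [RCLike 𝕜] [NormedAddCommGroup E] [InnerProductSpace 𝕜 E]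
    [FiniteDimensional 𝕜 E] {T : κ → Module.End 𝕜 E} (hT : ∀ d, (T d).IsSymmetric)
    (hC : Pairwise (Commute on T)) :
    ∃ (b : OrthonormalBasis (Fin (finrank 𝕜 E)) 𝕜 E) (χ : Fin (finrank 𝕜 E) → κ → 𝕜),
      ∀ p d, T d (b p) = χ p d • b p := by
  classical
  let V : (κ → 𝕜) → Submodule 𝕜 E := fun χ ↦ ⨅ d, End.eigenspace (T d) (χ d)
  have hV : DirectSum.IsInternal V := IsSymmetric.directSum_isInternal_of_pairwise_commute hT hC
  -- only finitely many joint eigenspaces are nonzero, and an orthonormal basis needs a finite index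
  let _ : Fintype {χ // V χ ≠ ⊥} := hV.submodule_iSupIndep.fintypeNeBotOfFiniteDimensional
  have hV' : DirectSum.IsInternal fun χ : {χ // V χ ≠ ⊥} ↦ V χ :=
    DirectSum.isInternal_ne_bot_iff.mpr hV
  have hVorth : OrthogonalFamily 𝕜 (fun χ : {χ // V χ ≠ ⊥} ↦ V χ) fun χ ↦ (V χ).subtypeₗᵢ :=
    (IsSymmetric.orthogonalFamily_iInf_eigenspaces hT).comp Subtype.val_injective
  refine ⟨hV'.subordinateOrthonormalBasis rfl hVorth,
    fun p ↦ (hV'.subordinateOrthonormalBasisIndex rfl p hVorth).1, fun p d ↦ ?_⟩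
  exact End.mem_eigenspace_iff.mp <|
    (Submodule.mem_iInf _).mp (hV'.subordinateOrthonormalBasis_subordinate rfl p hVorth) d

open Matrix in
theorem Matrix.IsHermitian.exists_unitary_conjTranspose_mul_mul_eq_diagonal
    {𝕜 ι κ : Type*} [RCLike 𝕜] [Fintype ι] [DecidableEq ι] {A : κ → Matrix ι ι 𝕜}
    (hA : ∀ d, (A d).IsHermitian) (hC : Pairwise (Commute on A)) :
    ∃ U ∈ unitaryGroup ι 𝕜, ∃ χ : ι → κ → 𝕜, ∀ d, Uᴴ * A d * U = diagonal (χ · d) := by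
  have hT : ∀ d, (toEuclideanLin (A d)).IsSymmetric := fun d ↦
    isSymmetric_toEuclideanLin_iff.mpr (hA d)
  have hTC : Pairwise (Commute on fun d ↦ toEuclideanLin (A d)) := fun c d hcd ↦ by
    have := (hC hcd).map (toEuclideanCLM (𝕜 := 𝕜) (n := ι))
    exact congr(ContinuousLinearMap.toLinearMap $this.eq)
  obtain ⟨b, χ, hb⟩ := LinearMap.IsSymmetric.exists_orthonormalBasis_forall_apply_eq_smul hT hTC
  let e : Fin (finrank 𝕜 (EuclideanSpace 𝕜 ι)) ≃ ι :=
    (Fintype.equivFinOfCardEq finrank_euclideanSpace.symm).symm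
  let b' := b.reindex e
  let U := (EuclideanSpace.basisFun ι 𝕜).toBasis.toMatrix b'
  have hU : U ∈ unitaryGroup ι 𝕜 :=
    (EuclideanSpace.basisFun ι 𝕜).toMatrix_orthonormalBasis_mem_unitary b'
  have heig : ∀ d, A d * U = U * diagonal (fun p ↦ χ (e.symm p) d) := fun d ↦ by
    ext j p
    have := congr(($(hb (e.symm p) d) : ι → 𝕜) j)
    rw [mul_diagonal]
    simpa [U, b', Basis.toMatrix_apply, Matrix.mul_apply, mulVec, dotProduct, mul_comm] using this
  refine ⟨U, hU, fun p d ↦ χ (e.symm p) d, fun d ↦ ?_⟩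
  rw [Matrix.mul_assoc, heig, ← Matrix.mul_assoc, ← star_eq_conjTranspose,
    mem_unitaryGroup_iff'.mp hU, Matrix.one_mul]

namespace StructureConstants

open Matrix

variable {ι α : Type*} {a : ι → ι → ι → α}

def IsSymmetric (a : ι → ι → ι → α) : Prop :=
  ∀ (σ : Equiv.Perm (Fin 3)) (g : Fin 3 → ι),
    a (g 0) (g 1) (g 2) = a (g (σ 0)) (g (σ 1)) (g (σ 2))

def IsAssociative [Fintype ι] [Mul α] [AddCommMonoid α] (a : ι → ι → ι → α) : Prop :=
  ∀ i j k l, ∑ d, a d i j * a d k l = ∑ d, a d i k * a d j l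

def mulMatrix (a : ι → ι → ι → α) (d : ι) : Matrix ι ι α :=
  of fun j k ↦ a d j k

def transform [Fintype ι] [CommSemiring α] (Q : Matrix ι ι α) (a : ι → ι → ι → α)
    (i j k : ι) : α :=
  ∑ i', ∑ j', ∑ k', Q i i' * Q j j' * Q k k' * a i' j' k'

theorem IsSymmetric.apply_swap₁₂ (ha : IsSymmetric a) (i j k : ι) : a i j k = a j i k := by
  simpa [Equiv.swap_apply_def, Fin.ext_iff] using ha (Equiv.swap 0 1) ![i, j, k]

theorem IsSymmetric.apply_swap₂₃ (ha : IsSymmetric a) (i j k : ι) : a i j k = a i k j := by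
  simpa [Equiv.swap_apply_def, Fin.ext_iff] using ha (Equiv.swap 1 2) ![i, j, k]

theorem isHermitian_mulMatrix [Star α] [TrivialStar α] (ha : IsSymmetric a) (d : ι) :
    (mulMatrix a d).IsHermitian :=
  IsHermitian.ext fun j k ↦ by simp [mulMatrix, ha.apply_swap₂₃ d j k]

theorem commute_mulMatrix [Fintype ι] [CommSemiring α] (ha : IsSymmetric a)
    (hassoc : IsAssociative a) (c d : ι) : Commute (mulMatrix a c) (mulMatrix a d) := by
  ext p q
  have hentry : ∀ c d, (mulMatrix a c * mulMatrix a d) p q = ∑ x, a x p c * a x d q := fun c d ↦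
    Finset.sum_congr rfl fun x _ ↦ by
      simp only [mulMatrix, of_apply]
      rw [ha.apply_swap₁₂ c, ha.apply_swap₂₃ p, ha.apply_swap₁₂ p, ha.apply_swap₁₂ d]
  rw [hentry, hentry, hassoc]

theorem transform_swap₁₂ [Fintype ι] [CommSemiring α] (ha : IsSymmetric a) (Q : Matrix ι ι α)
    (i j k : ι) : transform Q a i j k = transform Q a j i k := by
  rw [transform, Finset.sum_comm]
  refine Fintype.sum_congr _ _ fun j' ↦ Fintype.sum_congr _ _ fun i' ↦
    Fintype.sum_congr _ _ fun k' ↦ ?_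
  rw [ha.apply_swap₁₂ j']
  ring

theorem transform_eq_sum_mul_mulMatrix_mul_transpose [Fintype ι] [CommSemiring α]
    (Q : Matrix ι ι α) (a : ι → ι → ι → α) (i j k : ι) :
    transform Q a i j k = ∑ i', Q i i' * (Q * mulMatrix a i' * Qᵀ) j k := by
  simp only [transform, mul_apply, mulMatrix, of_apply, transpose_apply, Finset.mul_sum,
    Finset.sum_mul]
  refine Fintype.sum_congr _ _ fun i' ↦ ?_
  rw [Finset.sum_comm]
  refine Fintype.sum_congr _ _ fun j' ↦ Fintype.sum_congr _ _ fun k' ↦ ?_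
  ring

end StructureConstants

open Matrix StructureConstants in
theorem structure_constants_diagonalizable_by_orthogonal_transformation_general
    (N : ℕ)
    (a : Fin N → Fin N → Fin N → ℝ)
    (hsymm : ∀ (σ : Equiv.Perm (Fin 3)) (g : Fin 3 → Fin N),
      a (g 0) (g 1) (g 2) = a (g (σ 0)) (g (σ 1)) (g (σ 2)))
    (hassoc : ∀ i j k l : Fin N,
      ∑ d, a d i j * a d k l = ∑ d, a d i k * a d j l) :
    ∃ R : Matrix (Fin N) (Fin N) ℝ, R ∈ Matrix.orthogonalGroup (Fin N) ℝ ∧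
      ∀ i j k : Fin N, ¬ (i = j ∧ j = k) →
        (∑ i', ∑ j', ∑ k', R i i' * R j j' * R k k' * a i' j' k') = 0 := by
  obtain ⟨U, hU, χ, hdiag⟩ := IsHermitian.exists_unitary_conjTranspose_mul_mul_eq_diagonal
    (isHermitian_mulMatrix hsymm) fun c d _ ↦ commute_mulMatrix hsymm hassoc c d
  have hoff : ∀ i j k, j ≠ k → transform Uᵀ a i j k = 0 := fun i j k hjk ↦ by
    simp [transform_eq_sum_mul_mulMatrix_mul_transpose, ← conjTranspose_eq_transpose_of_trivial,
      hdiag, diagonal_apply_ne _ hjk]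
  refine ⟨Uᵀ, transpose_mem_unitaryGroup_iff.mpr hU, fun i j k hijk ↦ ?_⟩
  by_cases hjk : j = k
  · subst hjk
    rw [← transform, transform_swap₁₂ hsymm]
    exact hoff j i j fun hij ↦ hijk ⟨hij, rfl⟩
  · exact hoff i j k hjk

/-- Fully symmetric real structure constants `a_{abc}` on `ℝᴺ`
satisfying the associativity condition `Σ_d a_{dab} a_{dcf} = Σ_d a_{dac} a_{dbf}`
can be brought, by an orthogonal transformation `R ∈ O(N)`, to a form in which the
transformed structure constants vanish whenever two of the three indices differ:
there are no cross-interactions between distinct gravitons. -/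
theorem structure_constants_diagonalizable_by_orthogonal_transformation
    (N : ℕ) (hN : 1 ≤ N)
    (a : Fin N → Fin N → Fin N → ℝ)
    (hsymm : ∀ (σ : Equiv.Perm (Fin 3)) (g : Fin 3 → Fin N),
      a (g 0) (g 1) (g 2) = a (g (σ 0)) (g (σ 1)) (g (σ 2)))
    (hassoc : ∀ i j k l : Fin N,
      ∑ d, a d i j * a d k l = ∑ d, a d i k * a d j l) :
    ∃ R : Matrix (Fin N) (Fin N) ℝ, R ∈ Matrix.orthogonalGroup (Fin N) ℝ ∧
      ∀ i j k : Fin N, ¬ (i = j ∧ j = k) →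
        (∑ i', ∑ j', ∑ k', R i i' * R j j' * R k k' * a i' j' k') = 0 :=
  structure_constants_diagonalizable_by_orthogonal_transformation_general N a hsymm hassoc
end
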